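/- arXiv:1811.05439 — 4 statements merged into one kernel-verified Lean document; each statement's English description precedes it below -/
import Mathlib

section
/- For any natural number r, the univariate polynomial given by the Taylor expansion of e^{-t} truncated at degree 2r, namely p(t) = Σ_{k=0}^{2r} (-1)^k t^k / k!, is a sum of squares of polynomials with real coefficients. -/
/-!
A real polynomial that is nonnegative on `ℝ` is a sum of squares, by induction on the degree: at a
real root `a` (a minimum, hence a double root) split off `(X - a)²`; without real roots, a monic
quadratic factor `(X + b/2)² + d` with `d > 0` exists. The quotient is nonnegative off the finitely
many roots of the factor, hence everywhere by continuity.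

The truncation `f = ∑_{k ≤ 2r} (-t)^k / k!` is nonnegative: for `t ≤ 0` every term is, and since
`f' + f = t^{2r} / (2r)!`, the function `e^t f(t)` is nondecreasing, so `e^t f(t) ≥ f(0) = 1` for
`t ≥ 0`.
-/

open Polynomial

theorem IsSumSq.map {R S : Type*} [NonAssocSemiring R] [NonAssocSemiring S] (f : R →+* S)
    {s : R} (hs : IsSumSq s) : IsSumSq (f s) := by
  induction hs with
  | zero => exact map_zero f ▸ .zero
  | sq_add a _ ih => simpa using ih.sq_add (f a)

theorem IsSumSq.exists_eq_sum_sq {R : Type*} [Semiring R] {s : R} (hs : IsSumSq s) :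
    ∃ (m : ℕ) (q : Fin m → R), s = ∑ i, q i ^ 2 := by
  induction hs with
  | zero => exact ⟨0, finZeroElim, by simp⟩
  | sq_add a _ ih =>
    obtain ⟨m, q, rfl⟩ := ih
    exact ⟨m + 1, Fin.cons a q, by simp [Fin.sum_univ_succ, sq]⟩

theorem IsSumSq.eval_nonneg {p : ℝ[X]} (hp : IsSumSq p) (x : ℝ) : 0 ≤ p.eval x :=
  (hp.map (evalRingHom x)).nonneg

namespace Polynomial

theorem eval_nonneg_of_eval_mul_nonneg {g h : ℝ[X]} (hg : g ≠ 0)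
    (hg_nonneg : ∀ x, 0 ≤ g.eval x) (hgh : ∀ x, 0 ≤ (g * h).eval x) (x : ℝ) : 0 ≤ h.eval x := by
  have hdense : Dense {x | g.IsRoot x}ᶜ := (finite_setOfPred_isRoot hg).countable.dense_compl ℝ
  have hsub : {x | g.IsRoot x}ᶜ ⊆ {x | 0 ≤ h.eval x} := fun y hy ↦
    nonneg_of_mul_nonneg_right (by simpa only [eval_mul] using hgh y) ((hg_nonneg y).lt_of_ne' hy)
  exact (isClosed_le continuous_const h.continuous).closure_subset_iff.2 hsub (hdense x)

theorem sq_X_sub_C_dvd_of_isRoot {p : ℝ[X]} (hp : ∀ x, 0 ≤ p.eval x) {a : ℝ}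
    (ha : p.IsRoot a) : (X - C a) ^ 2 ∣ p := by
  rcases eq_or_ne p 0 with rfl | hp0
  · exact dvd_zero _
  have hmin : IsLocalMin (fun x ↦ p.eval x) a :=
    Filter.Eventually.of_forall fun x ↦ by simpa [ha.eq_zero] using hp x
  have hderiv : p.derivative.IsRoot a := by
    simpa [Polynomial.deriv] using hmin.deriv_eq_zero
  rw [← le_rootMultiplicity_iff hp0]
  exact (one_lt_rootMultiplicity_iff_isRoot hp0).2 ⟨ha, hderiv⟩

theorem isSumSq_of_isMonicOfDegree_two {g : ℝ[X]} (hg : IsMonicOfDegree g 2)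
    (hroot : ∀ x, ¬ g.IsRoot x) : IsSumSq g := by
  obtain ⟨b, c, rfl⟩ := isMonicOfDegree_two_iff.1 hg
  set d := c - b ^ 2 / 4
  have hd : 0 < d := by
    by_contra! hd
    apply hroot (-b / 2 + √(-d))
    have := Real.sq_sqrt (neg_nonneg.2 hd)
    simp only [IsRoot, eval_add, eval_mul, eval_pow, eval_X, eval_C]
    linear_combination this
  have hsos : X ^ 2 + C b * X + C c = (X + C (b / 2)) * (X + C (b / 2)) + C √d * C √d := by
    rw [← C_mul, Real.mul_self_sqrt hd.le]
    refine Polynomial.funext fun x ↦ ?_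
    simp only [d, eval_add, eval_mul, eval_pow, eval_X, eval_C]
    ring
  rw [hsos]
  exact (IsSumSq.mul_self _).add (IsSumSq.mul_self _)

theorem exists_isSumSq_dvd_of_forall_eval_nonneg {p : ℝ[X]} (hdeg : 0 < p.natDegree)
    (hp : ∀ x, 0 ≤ p.eval x) : ∃ g, 0 < g.natDegree ∧ IsSumSq g ∧ g ∣ p := by
  by_cases hroot : ∃ a, p.IsRoot a
  · obtain ⟨a, ha⟩ := hroot
    refine ⟨(X - C a) ^ 2, by simp, ?_, sq_X_sub_C_dvd_of_isRoot hp ha⟩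
    exact sq (X - C a) ▸ IsSumSq.mul_self _
  push Not at hroot
  have hp0 : p ≠ 0 := ne_zero_of_natDegree_gt hdeg
  have hlc : p.leadingCoeff ≠ 0 := leadingCoeff_ne_zero.2 hp0
  have hmonic : IsMonicOfDegree (p * C p.leadingCoeff⁻¹) (p.natDegree - 1 + 1) :=
    ⟨by rw [natDegree_mul_C (inv_ne_zero hlc)]; omega, monic_mul_leadingCoeff_inv hp0⟩
  obtain ⟨g, q, hg | hg, hpq⟩ := hmonic.eq_isMonicOfDegree_one_or_two_mul
  all_goals
    have hgp : g ∣ p := Dvd.intro (q * C p.leadingCoeff) <| by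
      rw [← mul_assoc, ← hpq, mul_assoc, ← C_mul, inv_mul_cancel₀ hlc, C_1, mul_one]
    have hgroot : ∀ x, ¬ g.IsRoot x := fun x hx ↦ hroot x (hx.dvd hgp)
  · obtain ⟨r, rfl⟩ := isMonicOfDegree_one_iff.1 hg
    exact absurd (by simp) (hgroot (-r))
  · exact ⟨g, by simp [hg.natDegree_eq], isSumSq_of_isMonicOfDegree_two hg hgroot, hgp⟩

theorem isSumSq_of_forall_eval_nonneg {p : ℝ[X]} (hp : ∀ x, 0 ≤ p.eval x) : IsSumSq p := by
  induction hn : p.natDegree using Nat.strong_induction_on generalizing p with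
  | _ n ih =>
  rcases Nat.eq_zero_or_pos p.natDegree with hdeg | hdeg
  · obtain ⟨c, rfl⟩ := natDegree_eq_zero.1 hdeg
    have hc : 0 ≤ c := by simpa using hp 0
    rw [← Real.mul_self_sqrt hc, C_mul]
    exact IsSumSq.mul_self _
  obtain ⟨g, hg_deg, hg, q, rfl⟩ := exists_isSumSq_dvd_of_forall_eval_nonneg hdeg hp
  have hg0 : g ≠ 0 := ne_zero_of_natDegree_gt hg_deg
  have hq0 : q ≠ 0 := by rintro rfl; simp at hdeg
  have hq_deg : q.natDegree < n := by rw [← hn, natDegree_mul hg0 hq0]; omega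
  exact hg.mul (ih _ hq_deg (eval_nonneg_of_eval_mul_nonneg hg0 hg.eval_nonneg hp) rfl)

end Polynomial

noncomputable def expNegTaylor (n : ℕ) : ℝ[X] :=
  ∑ k ∈ Finset.range (n + 1), C ((-1 : ℝ) ^ k / k.factorial) * X ^ k

theorem expNegTaylor_succ (n : ℕ) :
    expNegTaylor (n + 1) =
      expNegTaylor n + C ((-1 : ℝ) ^ (n + 1) / (n + 1).factorial) * X ^ (n + 1) :=
  Finset.sum_range_succ _ _

theorem derivative_expNegTaylor_add_self (n : ℕ) :
    derivative (expNegTaylor n) + expNegTaylor n = C ((-1 : ℝ) ^ n / n.factorial) * X ^ n := by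
  induction n with
  | zero => simp [expNegTaylor]
  | succ n ih =>
    have hcoeff :
        (-1 : ℝ) ^ (n + 1) / (n + 1).factorial * (n + 1 : ℕ) = -((-1) ^ n / n.factorial) := by
      rw [Nat.factorial_succ]
      push_cast
      field_simp
      ring
    rw [expNegTaylor_succ, derivative_add, add_add_add_comm, ih, derivative_C_mul_X_pow, hcoeff,
      Nat.add_sub_cancel, C_neg, neg_mul, add_neg_cancel_left]

theorem eval_expNegTaylor_zero (n : ℕ) : (expNegTaylor n).eval 0 = 1 := by
  simp [expNegTaylor, eval_finsetSum, Finset.sum_range_succ']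

theorem eval_expNegTaylor_nonneg_of_nonpos (n : ℕ) {t : ℝ} (ht : t ≤ 0) :
    0 ≤ (expNegTaylor n).eval t := by
  simp only [expNegTaylor, eval_finsetSum, eval_mul, eval_C, eval_pow, eval_X]
  refine Finset.sum_nonneg fun k _ ↦ ?_
  rw [div_mul_eq_mul_div, ← mul_pow, neg_one_mul]
  have := pow_nonneg (neg_nonneg.2 ht) k
  positivity

theorem hasDerivAt_exp_mul_eval_expNegTaylor (n : ℕ) (t : ℝ) :
    HasDerivAt (fun t ↦ Real.exp t * (expNegTaylor n).eval t)
      (Real.exp t * ((-1) ^ n / n.factorial * t ^ n)) t := by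
  refine ((Real.hasDerivAt_exp t).mul ((expNegTaylor n).hasDerivAt t)).congr_deriv ?_
  have := congrArg (eval t) (derivative_expNegTaylor_add_self n)
  simp only [eval_add, eval_mul, eval_C, eval_pow, eval_X] at this
  rw [← this]
  ring

theorem monotone_exp_mul_eval_expNegTaylor {n : ℕ} (hn : Even n) :
    Monotone fun t ↦ Real.exp t * (expNegTaylor n).eval t :=
  monotone_of_hasDerivAt_nonneg (hasDerivAt_exp_mul_eval_expNegTaylor n) fun t ↦ by
    have := hn.pow_nonneg t
    simp only [hn.neg_one_pow]
    positivity

theorem eval_expNegTaylor_nonneg {n : ℕ} (hn : Even n) (t : ℝ) :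
    0 ≤ (expNegTaylor n).eval t := by
  rcases le_total t 0 with ht | ht
  · exact eval_expNegTaylor_nonneg_of_nonpos n ht
  have h := monotone_exp_mul_eval_expNegTaylor hn ht
  simp only [Real.exp_zero, eval_expNegTaylor_zero, mul_one] at h
  exact (pos_of_mul_pos_right (one_pos.trans_le h) (Real.exp_pos t).le).le

/-- The degree-`2r` truncated Taylor polynomial of `e^{-t}` is a sum of squares of
real polynomials. -/
theorem taylor_exp_neg_truncated_isSumSq (r : ℕ) :
    ∃ (m : ℕ) (q : Fin m → Polynomial ℝ),
      (∑ k ∈ Finset.range (2 * r + 1),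
          Polynomial.C ((-1 : ℝ) ^ k / (Nat.factorial k)) * Polynomial.X ^ k)
        = ∑ i, (q i) ^ 2 := by
  have hnonneg : ∀ t, 0 ≤ (expNegTaylor (2 * r)).eval t :=
    eval_expNegTaylor_nonneg (even_two_mul r)
  exact (isSumSq_of_forall_eval_nonneg hnonneg).exists_eq_sum_sq
end

section
/- Let μ_0 be a positive finite Borel measure with support equal to a compact set K ⊆ ℝ^n, and let f be continuous on K. If ∫_K g² f dμ_0 ≥ 0 for every polynomial g ∈ ℝ[x_1,...,x_n], then f(x) ≥ 0 for all x ∈ K. Conversely, if f ≥ 0 on K then ∫_K g² f dμ_0 ≥ 0 for all polynomials g. -/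
/-!
Polynomials are uniformly dense in `C(K, ℝ)` by Stone–Weierstrass, and `g ↦ ∫ g² f dμ₀` is
continuous for the uniform norm, so the hypothesis extends to every continuous `g`. For
`g = max (-f) 0` one gets `∫ g² f dμ₀ = -∫ g³ dμ₀`, which is negative as soon as `f` is negative
somewhere, because `μ₀` charges every nonempty relatively open subset of `K`.
-/

open MeasureTheory

section CompactSpace

variable {X : Type*} [TopologicalSpace X] [CompactSpace X] [MeasurableSpace X]

theorem ContinuousMap.continuous_integral [BorelSpace X] {E : Type*} [NormedAddCommGroup E]
    [NormedSpace ℝ E] [SecondCountableTopologyEither X E] (ν : Measure X) [IsFiniteMeasure ν] :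
    Continuous fun g : C(X, E) => ∫ x, g x ∂ν := by
  have h : (fun g : C(X, E) => ∫ x, g x ∂ν) = fun g => ∫ x, toLp 1 ν ℝ g x ∂ν :=
    funext fun g => integral_congr_ae (coeFn_toLp ν g).symm
  rw [h]
  exact MeasureTheory.continuous_integral.comp (toLp 1 ν ℝ).continuous

theorem integral_sq_mul_nonneg_of_dense [BorelSpace X] {ν : Measure X} [IsFiniteMeasure ν]
    (F : C(X, ℝ)) {S : Set C(X, ℝ)} (hS : Dense S)
    (hpos : ∀ g ∈ S, 0 ≤ ∫ x, g x ^ 2 * F x ∂ν) (g : C(X, ℝ)) :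
    0 ≤ ∫ x, g x ^ 2 * F x ∂ν := by
  refine hS.induction hpos (isClosed_le continuous_const ?_) g
  exact (ContinuousMap.continuous_integral ν).comp ((continuous_id.pow 2).mul continuous_const)

theorem nonneg_of_forall_integral_sq_mul_nonneg [OpensMeasurableSpace X] {ν : Measure X}
    [IsFiniteMeasure ν] [ν.IsOpenPosMeasure] (F : C(X, ℝ))
    (hpos : ∀ g : C(X, ℝ), 0 ≤ ∫ x, g x ^ 2 * F x ∂ν) (x : X) : 0 ≤ F x := by
  by_contra! hx
  let negPart : C(X, ℝ) := ⟨fun y => max (-F y) 0, by fun_prop⟩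
  have hcube : ∀ y, negPart y ^ 2 * F y = -(negPart y ^ 3) := fun y => by
    rcases le_total (F y) 0 with h | h
    · simp [negPart, max_eq_left (neg_nonneg.mpr h)]; ring
    · simp [negPart, max_eq_right (neg_nonpos.mpr h)]
  have hcube_pos : 0 < ∫ y, negPart y ^ 3 ∂ν :=
    (negPart.continuous.pow 3).integral_pos_of_hasCompactSupport_nonneg_nonzero
      (.of_compactSpace _) (fun y => pow_nonneg (le_max_right _ _) 3)
      (x := x) (pow_ne_zero 3 (by simp [negPart, hx]))
  have hsq := hpos negPart
  simp only [hcube, integral_neg] at hsq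
  linarith

end CompactSpace

theorem MeasureTheory.Measure.isOpenPosMeasure_comap_subtype_val {α : Type*} [TopologicalSpace α]
    [MeasurableSpace α] {μ : Measure α} {s : Set α} (hs : MeasurableSet s) (hμs : μ sᶜ = 0)
    (hpos : ∀ U : Set α, IsOpen U → (U ∩ s).Nonempty → 0 < μ U) :
    (μ.comap (Subtype.val : s → α)).IsOpenPosMeasure := by
  refine ⟨?_⟩
  rintro _ ⟨U, hU, rfl⟩ hne
  rw [comap_subtype_coe_apply hs, Subtype.image_preimage_coe, Set.inter_comm,
    measure_inter_conull hμs]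
  obtain ⟨x, hx⟩ := hne
  exact (hpos U hU ⟨x, hx, x.2⟩).ne'

section MvPolynomialFunctions

variable {σ R : Type*} [CommSemiring R] [TopologicalSpace R] [IsTopologicalSemiring R]

noncomputable def MvPolynomial.toContinuousMapOnAlgHom (s : Set (σ → R)) :
    MvPolynomial σ R →ₐ[R] C(s, R) :=
  MvPolynomial.aeval fun i =>
    ⟨fun x => (x : σ → R) i, (continuous_apply i).comp continuous_subtype_val⟩

@[simp]
theorem MvPolynomial.toContinuousMapOnAlgHom_apply (s : Set (σ → R)) (p : MvPolynomial σ R)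
    (x : s) : toContinuousMapOnAlgHom s p x = eval (x : σ → R) p := by
  induction p using MvPolynomial.induction_on with
  | C a => simp [toContinuousMapOnAlgHom]
  | add p q hp hq => simp [hp, hq]
  | mul_X p i hp =>
    rw [map_mul, ContinuousMap.mul_apply, hp]
    simp [toContinuousMapOnAlgHom]

noncomputable def mvPolynomialFunctions (s : Set (σ → R)) : Subalgebra R C(s, R) :=
  (MvPolynomial.toContinuousMapOnAlgHom s).range

theorem mvPolynomialFunctions_separatesPoints (s : Set (σ → ℝ)) :
    (mvPolynomialFunctions s).SeparatesPoints := by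
  intro x y hxy
  obtain ⟨i, hi⟩ := Function.ne_iff.mp (Subtype.coe_ne_coe.mpr hxy)
  exact ⟨_, ⟨_, ⟨MvPolynomial.X i, rfl⟩, rfl⟩, by simpa using hi⟩

theorem dense_mvPolynomialFunctions {s : Set (σ → ℝ)} (hs : IsCompact s) :
    Dense (mvPolynomialFunctions s : Set C(s, ℝ)) := by
  have := isCompact_iff_compactSpace.mp hs
  refine dense_iff_closure_eq.mpr ?_
  rw [← Subalgebra.topologicalClosure_coe,
    ContinuousMap.subalgebra_topologicalClosure_eq_top_of_separatesPoints _
      (mvPolynomialFunctions_separatesPoints s)]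
  rfl

end MvPolynomialFunctions

/-- Lasserre's positivity characterization: let `μ0` be a positive finite Borel measure
whose support is the compact set `K` (i.e. `μ0` vanishes outside `K` and gives positive
mass to every open set meeting `K`), and let `f` be continuous on `K`. Then
`∫_K g² f dμ0 ≥ 0` for every polynomial `g` iff `f ≥ 0` on `K`. -/
theorem lasserre_positivity (n : ℕ) (K : Set (Fin n → ℝ)) (hK : IsCompact K)
    (μ0 : Measure (Fin n → ℝ)) [IsFiniteMeasure μ0] (hμ0 : μ0 Kᶜ = 0)
    (hsupp : ∀ U : Set (Fin n → ℝ), IsOpen U → (U ∩ K).Nonempty → 0 < μ0 U)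
    (f : (Fin n → ℝ) → ℝ) (hf : ContinuousOn f K) :
    (∀ g : MvPolynomial (Fin n) ℝ,
        0 ≤ ∫ x in K, (MvPolynomial.eval x g) ^ 2 * f x ∂μ0)
      ↔ ∀ x ∈ K, 0 ≤ f x := by
  have hKm : MeasurableSet K := hK.isClosed.measurableSet
  constructor
  · intro hpos x hx
    have : CompactSpace K := isCompact_iff_compactSpace.mp hK
    have := Measure.isOpenPosMeasure_comap_subtype_val hKm hμ0 hsupp
    let F : C(K, ℝ) := ⟨K.domRestrict f, hf.domRestrict⟩
    refine nonneg_of_forall_integral_sq_mul_nonneg (ν := μ0.comap Subtype.val) F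
      (integral_sq_mul_nonneg_of_dense F (dense_mvPolynomialFunctions hK) ?_) ⟨x, hx⟩
    rintro _ ⟨p, rfl⟩
    have hp := hpos p
    rw [← integral_subtype_comap hKm] at hp
    simpa [F] using hp
  · intro hpos g
    exact setIntegral_nonneg hKm fun x hx => mul_nonneg (sq_nonneg _) (hpos x hx)
end

section
/- Let G = (V, E) be a finite simple graph on n vertices with independence number α(G), adjacency matrix A_G, and identity I_n. Then min over the standard simplex Δ_n = {x ∈ ℝ^n : x ≥ 0, Σ_i x_i = 1} of xᵀ(I_n + A_G)x equals 1/α(G). (Motzkin–Straus theorem.) -/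
/-!
The uniform distribution on a maximum independent set `s` gives the value `1/|s|`.
Conversely, if two vertices `i, j` in the support of `x ∈ Δ` are adjacent, the form is affine
along `eᵢ - eⱼ`, so moving all the mass of one of them onto the other does not increase it and
shrinks the support. Once the support is independent, the form is `∑ xᵢ²`, which is at least
`1/|supp x| ≥ 1/α(G)` by Cauchy–Schwarz.
-/

open Matrix Finset

namespace SimpleGraph

variable {V : Type*} [Fintype V] [DecidableEq V] (G : SimpleGraph V) [DecidableRel G.Adj]

noncomputable def motzkinStrausForm (x : V → ℝ) : ℝ :=
  x ⬝ᵥ (1 + G.adjMatrix ℝ) *ᵥ x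

variable {G}

theorem motzkinStrausForm_eq_sum_sq {x : V → ℝ}
    (hx : ∀ i j, x i ≠ 0 → x j ≠ 0 → ¬ G.Adj i j) :
    G.motzkinStrausForm x = ∑ i, x i ^ 2 := by
  have hadj : x ⬝ᵥ G.adjMatrix ℝ *ᵥ x = 0 := by
    simp only [dotProduct, mulVec, Finset.mul_sum]
    refine Finset.sum_eq_zero fun i _ => Finset.sum_eq_zero fun j _ => ?_
    by_cases hi : x i = 0
    · simp [hi]
    by_cases hj : x j = 0
    · simp [hj]
    simp [hx i j hi hj]
  rw [motzkinStrausForm, add_mulVec, one_mulVec, dotProduct_add, hadj, add_zero]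
  simp only [dotProduct, sq]

/-- Along `eᵢ - eⱼ` for an edge `ij` the form is affine, since `(I + A_G)` has all four
entries on `{i, j}²` equal to `1`. -/
theorem motzkinStrausForm_add_smul_single_sub_single {i j : V} (hij : G.Adj i j)
    (x : V → ℝ) (t : ℝ) :
    G.motzkinStrausForm (x + t • (Pi.single i 1 - Pi.single j 1)) =
      G.motzkinStrausForm x +
        2 * t * (((1 + G.adjMatrix ℝ) *ᵥ x) i - ((1 + G.adjMatrix ℝ) *ᵥ x) j) := by
  unfold motzkinStrausForm
  set M : Matrix V V ℝ := 1 + G.adjMatrix ℝ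
  set d : V → ℝ := Pi.single i 1 - Pi.single j 1
  have hM : Mᵀ = M := by simp [M]
  have hdx : x ⬝ᵥ M *ᵥ d = d ⬝ᵥ M *ᵥ x := by
    rw [dotProduct_mulVec, ← mulVec_transpose, hM, dotProduct_comm]
  have hd : d ⬝ᵥ M *ᵥ x = (M *ᵥ x) i - (M *ᵥ x) j := by
    simp [d, sub_dotProduct, single_dotProduct]
  have hdd : d ⬝ᵥ M *ᵥ d = 0 := by
    simp [d, M, sub_dotProduct, single_dotProduct, mulVec_sub, mulVec_single, hij, hij.symm,
      hij.ne, hij.ne.symm, one_apply]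
  simp only [mulVec_add, mulVec_smul, add_dotProduct, dotProduct_add,
    smul_dotProduct, dotProduct_smul, hdx, hd, hdd, smul_eq_mul]
  ring

theorem exists_card_support_lt_motzkinStrausForm_le {x : V → ℝ} (hx : x ∈ stdSimplex ℝ V)
    {i j : V} (hij : G.Adj i j) (hi : x i ≠ 0) (hj : x j ≠ 0) :
    ∃ y ∈ stdSimplex ℝ V, #{k | y k ≠ 0} < #{k | x k ≠ 0} ∧
      G.motzkinStrausForm y ≤ G.motzkinStrausForm x := by
  wlog hle : ((1 + G.adjMatrix ℝ) *ᵥ x) i ≤ ((1 + G.adjMatrix ℝ) *ᵥ x) j generalizing i j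
  · exact this hij.symm hj hi (le_of_not_ge hle)
  set y := x + x j • (Pi.single i 1 - Pi.single j 1 : V → ℝ)
  have hy : y = Function.update (Function.update x i (x i + x j)) j 0 := by
    funext k
    by_cases hki : k = i <;> by_cases hkj : k = j <;>
      simp_all [y, hij.ne]
  refine ⟨y, ⟨fun k => ?_, ?_⟩, card_lt_card ?_, ?_⟩
  · rw [hy]
    by_cases hkj : k = j
    · simp [hkj]
    by_cases hki : k = i
    · subst hki
      rw [Function.update_of_ne hkj, Function.update_self]
      exact add_nonneg (hx.1 k) (hx.1 j)
    · simp [hki, hkj, hx.1 k]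
  · simp [y, sum_add_distrib, ← mul_sum, hx.2]
  · rw [Finset.ssubset_iff_of_subset]
    · exact ⟨j, by simp [hj], by simp [hy]⟩
    intro k
    by_cases hkj : k = j
    · simp [hy, hkj]
    by_cases hki : k = i
    · simp [hki, hi]
    · simp [hy, hki, hkj]
  · rw [motzkinStrausForm_add_smul_single_sub_single hij]
    nlinarith [hx.1 j]

theorem one_le_card_support_mul_sum_sq {ι : Type*} [Fintype ι] {x : ι → ℝ}
    (hx : ∑ i, x i = 1) : 1 ≤ #{i | x i ≠ 0} * ∑ i, x i ^ 2 := by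
  have hsum : ∑ i ∈ {i | x i ≠ 0}, x i = 1 := by rw [sum_filter_ne_zero, hx]
  have hsq : ∑ i ∈ {i | x i ≠ 0}, x i ^ 2 = ∑ i, x i ^ 2 :=
    sum_subset (subset_univ _) fun i _ hi => by simp_all
  simpa [hsum, hsq] using sq_sum_le_card_mul_sum_sq (s := {i | x i ≠ 0}) (f := x)

theorem inv_le_motzkinStrausForm {a : ℕ} (ha : ∀ s : Finset V, G.IsIndepSet s → #s ≤ a)
    {x : V → ℝ} (hx : x ∈ stdSimplex ℝ V) : 1 / (a : ℝ) ≤ G.motzkinStrausForm x := by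
  induction hm : #{k | x k ≠ 0} using Nat.strong_induction_on generalizing x with
  | _ m ih =>
  by_cases hadj : ∃ i j, x i ≠ 0 ∧ x j ≠ 0 ∧ G.Adj i j
  · obtain ⟨i, j, hi, hj, hij⟩ := hadj
    obtain ⟨y, hy, hcard, hle⟩ := exists_card_support_lt_motzkinStrausForm_le hx hij hi hj
    exact (ih _ (hm ▸ hcard) hy rfl).trans hle
  push Not at hadj
  have hind : G.IsIndepSet ↑({k | x k ≠ 0} : Finset V) := fun i hi j hj _ =>
    hadj i j (by simpa using hi) (by simpa using hj)
  have hcs := one_le_card_support_mul_sum_sq hx.2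
  have hcard : (#{k | x k ≠ 0} : ℝ) ≤ a := by exact_mod_cast ha _ hind
  have hsq : 0 ≤ ∑ i, x i ^ 2 := by positivity
  have ha_pos : (0 : ℝ) < a := by nlinarith
  rw [motzkinStrausForm_eq_sum_sq hadj, div_le_iff₀ ha_pos]
  nlinarith

theorem indicator_inv_card_mem_stdSimplex {s : Finset V} (hs : s.Nonempty) :
    (fun i => if i ∈ s then (#s : ℝ)⁻¹ else 0) ∈ stdSimplex ℝ V := by
  refine ⟨fun i => by positivity, ?_⟩
  simp [sum_ite_mem, hs.card_ne_zero]

theorem motzkinStrausForm_indicator_inv_card {s : Finset V} (hs : G.IsIndepSet s) :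
    G.motzkinStrausForm (fun i => if i ∈ s then (#s : ℝ)⁻¹ else 0) = 1 / #s := by
  rw [motzkinStrausForm_eq_sum_sq]
  · rcases eq_or_ne (#s : ℝ) 0 with h | h
    · simp [h]
    · simp [sum_ite_mem]
      field_simp
  intro i j hi hj
  by_cases hij : i = j
  · simp [hij]
  · exact hs (of_not_not fun h => hi (if_neg h)) (of_not_not fun h => hj (if_neg h)) hij

end SimpleGraph

/-- Motzkin–Straus theorem: for a finite simple graph `G` on `n ≥ 1` vertices with
independence number `a = α(G)`, the minimum of `xᵀ(I + A_G)x` over the standard simplex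
equals `1/α(G)`, and it is attained. -/
theorem motzkin_straus (n : ℕ) (hn : 0 < n) (G : SimpleGraph (Fin n))
    [DecidableRel G.Adj] (a : ℕ)
    (hα : IsGreatest {k : ℕ | ∃ s : Finset (Fin n),
        (↑s : Set (Fin n)).Pairwise (fun i j => ¬ G.Adj i j) ∧ s.card = k} a) :
    IsLeast {t : ℝ | ∃ x : Fin n → ℝ, (∀ i, 0 ≤ x i) ∧ (∑ i, x i = 1) ∧
        t = dotProduct x ((1 + G.adjMatrix ℝ).mulVec x)} (1 / (a : ℝ)) := by
  obtain ⟨⟨s, hs, rfl⟩, hmax⟩ := hα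
  have hne : s.Nonempty := card_pos.1 (hmax ⟨{⟨0, hn⟩}, by simp, rfl⟩)
  obtain ⟨hx0, hx1⟩ := SimpleGraph.indicator_inv_card_mem_stdSimplex hne
  refine ⟨⟨_, hx0, hx1, (SimpleGraph.motzkinStrausForm_indicator_inv_card hs).symm⟩, ?_⟩
  rintro t ⟨x, hx0, hx1, rfl⟩
  exact SimpleGraph.inv_le_motzkinStrausForm (fun t ht => hmax ⟨t, ht, rfl⟩) ⟨hx0, hx1⟩
end

section
/- For a finite simple graph G = (V,E) on vertex set [n], the independence number satisfies α(G) = max over x ∈ [0,1]^n of (Σ_{i∈V} x_i − Σ_{{i,j}∈E} x_i x_j). -/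
open Finset

variable {n : ℕ} (G : SimpleGraph (Fin n)) [DecidableRel G.Adj]

noncomputable def fG (x : Fin n → ℝ) : ℝ :=
  ∑ i, x i - (1 / 2) * ∑ i, ∑ j, (if G.Adj i j then x i * x j else 0)

lemma key (x : Fin n → ℝ) (i : Fin n) (t : ℝ) :
    fG G (Function.update x i t) =
      (∑ j ∈ univ.erase i, x j)
      - (1/2) * (∑ j ∈ univ.erase i, ∑ k ∈ univ.erase i,
          (if G.Adj j k then x j * x k else 0))
      + t * (1 - ∑ k, (if G.Adj i k then x k else 0)) := by
  classical
  set u := Function.update x i t with hu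
  have hui : u i = t := Function.update_self i t x
  have huj : ∀ j, j ≠ i → u j = x j := fun j hj => Function.update_of_ne hj t x
  have hlin : ∑ j, u j = t + ∑ j ∈ univ.erase i, x j := by
    rw [← Finset.add_sum_erase _ u (mem_univ i), hui]
    congr 1
    exact Finset.sum_congr rfl fun j hj => huj j (Finset.ne_of_mem_erase hj)
  have hS : ∀ s : ℝ, ∑ k, (if G.Adj i k then s * u k else 0)
      = s * ∑ k, (if G.Adj i k then x k else 0) := by
    intro s
    rw [Finset.mul_sum]
    refine Finset.sum_congr rfl fun k _ => ?_
    by_cases hk : k = i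
    · subst hk; simp [G.irrefl]
    · rw [huj k hk]; split <;> ring
  have hQ : ∑ j, ∑ k, (if G.Adj j k then u j * u k else 0)
      = 2 * t * (∑ k, (if G.Adj i k then x k else 0))
        + ∑ j ∈ univ.erase i, ∑ k ∈ univ.erase i,
          (if G.Adj j k then x j * x k else 0) := by
    rw [← Finset.add_sum_erase _ _ (mem_univ i)]
    have h1 : ∑ k, (if G.Adj i k then u i * u k else 0)
        = t * ∑ k, (if G.Adj i k then x k else 0) := by
      rw [hui]; exact hS t
    have h2 : ∀ j ∈ univ.erase i, ∑ k, (if G.Adj j k then u j * u k else 0)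
        = (if G.Adj j i then x j * t else 0)
          + ∑ k ∈ univ.erase i, (if G.Adj j k then x j * x k else 0) := by
      intro j hj
      have hji := Finset.ne_of_mem_erase hj
      rw [← Finset.add_sum_erase _ _ (mem_univ i), hui, huj j hji]
      congr 1
      exact Finset.sum_congr rfl fun k hk => by rw [huj k (Finset.ne_of_mem_erase hk)]
    rw [h1, Finset.sum_congr rfl h2, Finset.sum_add_distrib]
    have h3 : ∑ j ∈ univ.erase i, (if G.Adj j i then x j * t else 0)
        = t * ∑ k, (if G.Adj i k then x k else 0) := by
      rw [Finset.mul_sum, ← Finset.add_sum_erase _ (fun k => t * if G.Adj i k then x k else 0) (mem_univ i)]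
      simp only [G.irrefl, if_false, mul_zero, zero_add]
      refine Finset.sum_congr rfl fun j hj => ?_
      by_cases h : G.Adj i j
      · rw [if_pos h, if_pos (G.adj_symm h)]; ring
      · rw [if_neg h, if_neg (fun h' => h (G.adj_symm h')), mul_zero]
    rw [h3]; ring
  rw [fG, hlin, hQ]; ring

lemma key2 (x : Fin n → ℝ) (i : Fin n) (t : ℝ) :
    fG G (Function.update x i t) = fG G (Function.update x i 0)
      + t * (1 - ∑ k, (if G.Adj i k then x k else 0)) := by
  rw [key G x i t, key G x i 0]; ring

noncomputable def ind (s : Finset (Fin n)) : Fin n → ℝ := fun i => if i ∈ s then 1 else 0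

lemma ind_update (s : Finset (Fin n)) (u : Fin n) :
    Function.update (ind s) u 0 = ind (s.erase u) := by
  funext j
  by_cases hj : j = u
  · subst hj; simp [ind, Function.update_self]
  · rw [Function.update_of_ne hj]
    simp [ind, Finset.mem_erase, hj]

lemma indep_val (s : Finset (Fin n))
    (hs : (↑s : Set (Fin n)).Pairwise (fun i j => ¬ G.Adj i j)) :
    fG G (ind s) = s.card := by
  have h0 : ∀ i j : Fin n, (if G.Adj i j then ind s i * ind s j else 0) = 0 := by
    intro i j
    by_cases h : G.Adj i j
    · rw [if_pos h]
      by_cases hi : i ∈ s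
      · by_cases hj : j ∈ s
        · exact absurd h (hs hi hj (G.ne_of_adj h))
        · simp [ind, hj]
      · simp [ind, hi]
    · rw [if_neg h]
  simp only [fG, h0, Finset.sum_const_zero, mul_zero, sub_zero]
  simp [ind]

lemma bound_int (a : ℕ)
    (hub : ∀ k ∈ {k : ℕ | ∃ s : Finset (Fin n),
        (↑s : Set (Fin n)).Pairwise (fun i j => ¬ G.Adj i j) ∧ s.card = k}, k ≤ a) :
    ∀ s : Finset (Fin n), fG G (ind s) ≤ a := by
  intro s
  induction s using Finset.strongInduction with
  | _ s IH =>
  by_cases hs : (↑s : Set (Fin n)).Pairwise (fun i j => ¬ G.Adj i j)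
  · rw [indep_val G s hs]
    exact_mod_cast hub s.card ⟨s, hs, rfl⟩
  · rw [Set.Pairwise] at hs
    push_neg at hs
    obtain ⟨u, hu, v, hv, huv, hadj⟩ := hs
    rw [Finset.mem_coe] at hu hv
    have hpos : ∀ k, (0:ℝ) ≤ if G.Adj u k then ind s k else 0 := by
      intro k; unfold ind; split <;> [skip; norm_num]
      split <;> norm_num
    have hS : (1:ℝ) ≤ ∑ k, if G.Adj u k then ind s k else 0 := by
      calc (1:ℝ) = if G.Adj u v then ind s v else 0 := by
            rw [if_pos hadj]; simp [ind, hv]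
        _ ≤ _ := Finset.single_le_sum (fun k _ => hpos k) (Finset.mem_univ v)
    have h1 : ind s = Function.update (ind s) u 1 := by
      funext j
      by_cases hj : j = u
      · subst hj; rw [Function.update_self]; simp [ind, hu]
      · rw [Function.update_of_ne hj]
    calc fG G (ind s) = fG G (Function.update (ind s) u 1) := by rw [← h1]
      _ = fG G (Function.update (ind s) u 0)
            + 1 * (1 - ∑ k, if G.Adj u k then ind s k else 0) := key2 G (ind s) u 1
      _ ≤ fG G (Function.update (ind s) u 0) := by nlinarith
      _ = fG G (ind (s.erase u)) := by rw [ind_update]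
      _ ≤ a := IH _ (Finset.erase_ssubset hu)

lemma bound_round (a : ℕ)
    (hub : ∀ k ∈ {k : ℕ | ∃ s : Finset (Fin n),
        (↑s : Set (Fin n)).Pairwise (fun i j => ¬ G.Adj i j) ∧ s.card = k}, k ≤ a) :
    ∀ m : ℕ, ∀ x : Fin n → ℝ, (∀ i, x i ∈ Set.Icc (0:ℝ) 1) →
      (Finset.univ.filter (fun i => x i ≠ 0 ∧ x i ≠ 1)).card ≤ m → fG G x ≤ a := by
  intro m
  induction m with
  | zero =>
    intro x hx hc
    have he : Finset.univ.filter (fun i => x i ≠ 0 ∧ x i ≠ 1) = ∅ :=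
      Finset.card_eq_zero.mp (Nat.le_zero.mp hc)
    have hx01 : ∀ i, x i = 0 ∨ x i = 1 := by
      intro i
      by_contra h
      push_neg at h
      have : i ∈ Finset.univ.filter (fun i => x i ≠ 0 ∧ x i ≠ 1) := by
        simp [h.1, h.2]
      rw [he] at this
      exact absurd this (Finset.notMem_empty i)
    have hxind : x = ind (Finset.univ.filter (fun i => x i = 1)) := by
      funext j
      rcases hx01 j with h | h <;> simp [ind, h]
    rw [hxind]
    exact bound_int G a hub _
  | succ m IH =>
    intro x hx hc
    by_cases hne : (Finset.univ.filter (fun i => x i ≠ 0 ∧ x i ≠ 1)).Nonempty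
    · obtain ⟨i, hi⟩ := hne
      rw [Finset.mem_filter] at hi
      obtain ⟨-, hi0, hi1⟩ := hi
      have hxi := hx i
      have hxx : x = Function.update x i (x i) := by
        funext j; by_cases hj : j = i
        · subst hj; rw [Function.update_self]
        · rw [Function.update_of_ne hj]
      -- fractional count decreases for updates
      have hcount : ∀ c : ℝ, c = 0 ∨ c = 1 →
          (Finset.univ.filter (fun j => Function.update x i c j ≠ 0 ∧
            Function.update x i c j ≠ 1)).card ≤ m := by
        intro c hc01
        have hsub : Finset.univ.filter (fun j => Function.update x i c j ≠ 0 ∧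
            Function.update x i c j ≠ 1) ⊆
            (Finset.univ.filter (fun j => x j ≠ 0 ∧ x j ≠ 1)).erase i := by
          intro j hj
          rw [Finset.mem_filter] at hj
          obtain ⟨-, hj0, hj1⟩ := hj
          have hji : j ≠ i := by
            intro h; subst h
            rw [Function.update_self] at hj0 hj1
            rcases hc01 with h | h
            · exact hj0 h
            · exact hj1 h
          rw [Function.update_of_ne hji] at hj0 hj1
          rw [Finset.mem_erase, Finset.mem_filter]
          exact ⟨hji, Finset.mem_univ j, hj0, hj1⟩
        calc _ ≤ ((Finset.univ.filter (fun j => x j ≠ 0 ∧ x j ≠ 1)).erase i).card :=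
              Finset.card_le_card hsub
          _ = (Finset.univ.filter (fun j => x j ≠ 0 ∧ x j ≠ 1)).card - 1 :=
              Finset.card_erase_of_mem (by simp [hi0, hi1])
          _ ≤ m := by omega
      have hmem : ∀ c : ℝ, c = 0 ∨ c = 1 → ∀ j, Function.update x i c j ∈ Set.Icc (0:ℝ) 1 := by
        intro c hc01 j
        by_cases hj : j = i
        · subst hj; rw [Function.update_self]
          rcases hc01 with h | h <;> subst h <;> constructor <;> norm_num
        · rw [Function.update_of_ne hj]; exact hx j
      have hk := key2 G x i (x i)
      rw [← hxx] at hk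
      set D := 1 - ∑ k, (if G.Adj i k then x k else 0) with hD
      by_cases hDpos : 0 ≤ D
      · have h1 : fG G x ≤ fG G (Function.update x i 1) := by
          rw [key2 G x i 1, one_mul, ← hD]
          rw [hk]
          nlinarith [hxi.2]
        exact h1.trans (IH _ (hmem 1 (Or.inr rfl)) (hcount 1 (Or.inr rfl)))
      · have h1 : fG G x ≤ fG G (Function.update x i 0) := by
          rw [hk]
          nlinarith [hxi.1]
        exact h1.trans (IH _ (hmem 0 (Or.inl rfl)) (hcount 0 (Or.inl rfl)))
    · rw [Finset.not_nonempty_iff_eq_empty] at hne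
      exact IH x hx (by rw [hne, Finset.card_empty]; omega)


/-- The independence number of a finite simple graph `G` on `[n]` equals the maximum over
the hypercube `[0,1]^n` of `∑_i x_i − ∑_{{i,j}∈E} x_i x_j` (the edge sum is written as
half the sum over ordered adjacent pairs). -/
theorem independence_number_cube (n : ℕ) (G : SimpleGraph (Fin n))
    [DecidableRel G.Adj] (a : ℕ)
    (hα : IsGreatest {k : ℕ | ∃ s : Finset (Fin n),
        (↑s : Set (Fin n)).Pairwise (fun i j => ¬ G.Adj i j) ∧ s.card = k} a) :
    IsGreatest {t : ℝ | ∃ x : Fin n → ℝ, (∀ i, x i ∈ Set.Icc (0 : ℝ) 1) ∧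
        t = ∑ i, x i - (1 / 2) * ∑ i, ∑ j, (if G.Adj i j then x i * x j else 0)}
      (a : ℝ) := by
  constructor
  · obtain ⟨s, hs, hcard⟩ := hα.1
    refine ⟨ind s, fun i => ?_, ?_⟩
    · unfold ind; split <;> constructor <;> norm_num
    · have := indep_val G s hs
      rw [fG] at this
      rw [this, hcard]
  · rintro t ⟨x, hx, rfl⟩
    have : fG G x ≤ a := bound_round G a hα.2 _ x hx le_rfl
    rwa [fG] at this
end
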